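/- The algebraic sandwiched Rényi relative entropy converges to the algebraic relative entropy as the Rényi index tends to 1: in the block setup with each ρ_{a_α} also positive definite, lim_{n→1} (n−1)⁻¹ · log [ Σ_α p_α^n q_α^{1−n} · exp((n−1) S_n(ρ_{a_α} ‖ σ_{a_α})) ] = Σ_α p_α log(p_α/q_α) + Σ_α p_α S(ρ_{a_α} ‖ σ_{a_α}). -/

import Mathlib

open Matrix
open scoped Kronecker ComplexOrder

/-- Real power of a Hermitian matrix via the spectral functional calculus
(junk value `0` on non-Hermitian matrices). -/
noncomputable def mpow {m : Type*} [Fintype m] [DecidableEq m]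
    (A : Matrix m m ℂ) (r : ℝ) : Matrix m m ℂ :=
  if hA : A.IsHermitian then
    (hA.eigenvectorUnitary : Matrix m m ℂ) *
      Matrix.diagonal (fun i => ((hA.eigenvalues i ^ r : ℝ) : ℂ)) *
      (star (hA.eigenvectorUnitary : Matrix m m ℂ))
  else 0

/-- Logarithm of a Hermitian matrix via the spectral functional calculus
(junk value `0` on non-Hermitian matrices). -/
noncomputable def mlog {m : Type*} [Fintype m] [DecidableEq m]
    (A : Matrix m m ℂ) : Matrix m m ℂ :=
  if hA : A.IsHermitian then
    (hA.eigenvectorUnitary : Matrix m m ℂ) *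
      Matrix.diagonal (fun i => ((Real.log (hA.eigenvalues i) : ℝ) : ℂ)) *
      (star (hA.eigenvectorUnitary : Matrix m m ℂ))
  else 0

/-- A density matrix: positive semidefinite with unit trace. -/
def IsDensity {m : Type*} [Fintype m] [DecidableEq m] (A : Matrix m m ℂ) : Prop :=
  A.PosSemidef ∧ A.trace = 1

/-- Sandwiched Rényi relative entropy
`S_n(ρ‖σ) = (n-1)⁻¹ log Tr[(σ^{(1-n)/(2n)} ρ σ^{(1-n)/(2n)})^n]`. -/
noncomputable def SRenyi {m : Type*} [Fintype m] [DecidableEq m]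
    (n : ℝ) (ρ σ : Matrix m m ℂ) : ℝ :=
  (n - 1)⁻¹ *
    Real.log ((mpow (mpow σ ((1 - n) / (2 * n)) * ρ * mpow σ ((1 - n) / (2 * n))) n).trace.re)

/-- Quantum relative entropy `S(ρ‖σ) = Tr(ρ log ρ) - Tr(ρ log σ)`. -/
noncomputable def relEnt {m : Type*} [Fintype m] [DecidableEq m]
    (ρ σ : Matrix m m ℂ) : ℝ :=
  ((ρ * mlog ρ).trace - (ρ * mlog σ).trace).re

/-- von Neumann entropy `S(τ) = -Tr(τ log τ)`. -/
noncomputable def vnEnt {m : Type*} [Fintype m] [DecidableEq m]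
    (τ : Matrix m m ℂ) : ℝ :=
  -((τ * mlog τ).trace.re)

/-!
Write `T(n) = Tr[(σ^c ρ σ^c)^n]` with `c = (1 - n) / (2n)`. The expression is `(n - 1)⁻¹ log F(n)`
with `F(n) = ∑ p^n q^(1-n) T_α(n)` and `F(1) = 1`, so its limit is `F'(1)`, and everything reduces
to `T'(1) = S(ρ‖σ)`.

For this, let `μᵢ(n)` be the eigenvalues of `σ^c ρ σ^c`, and split
`T(n) - 1 = ∑ (μᵢ^n - μᵢ) + (Tr[σ^(2c) ρ] - 1)`. The second term is an explicit function of `n`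
with derivative `-Tr[ρ log σ]` at `n = 1`. Near `n = 1` the `μᵢ` stay in a fixed compact subset of
`(0, ∞)` (bounded above by the trace and below through the determinant), so
`(μ^n - μ) / (n - 1) = μ log μ + O(n - 1)` uniformly, and `∑ μᵢ log μᵢ → Tr[ρ log ρ]` because it is
the trace of the continuous functional calculus applied to a continuous matrix family.
-/

open Filter Topology

lemma rpow_le_max_self_inv {x t : ℝ} (hx : 0 < x) (ht : |t| ≤ 1) : x ^ t ≤ max x x⁻¹ := by
  obtain ⟨ht₁, ht₂⟩ := abs_le.1 ht
  rcases le_or_gt 1 x with h | h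
  · calc x ^ t ≤ x ^ (1 : ℝ) := Real.rpow_le_rpow_of_exponent_le h ht₂
      _ ≤ max x x⁻¹ := by rw [Real.rpow_one]; exact le_max_left _ _
  · calc x ^ t ≤ x ^ (-1 : ℝ) := Real.rpow_le_rpow_of_exponent_ge hx h.le ht₁
      _ ≤ max x x⁻¹ := by rw [Real.rpow_neg_one]; exact le_max_right _ _

lemma inv_max_self_inv_le_rpow {x t : ℝ} (hx : 0 < x) (ht : |t| ≤ 1) :
    (max x x⁻¹)⁻¹ ≤ x ^ t := by
  rw [← inv_inv (x ^ t), ← Real.rpow_neg hx.le]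
  exact inv_anti₀ (Real.rpow_pos_of_pos hx _) (rpow_le_max_self_inv hx (by rwa [abs_neg]))

lemma div_pow_card_sub_one_le_of_le_prod {ι : Type*} [Fintype ι] [DecidableEq ι] {x : ι → ℝ}
    {m K : ℝ} (hm : 0 < m) (hx : ∀ j, 0 ≤ x j) (hxK : ∀ j, x j ≤ K) (hprod : m ≤ ∏ j, x j)
    (i : ι) : m / K ^ (Fintype.card ι - 1) ≤ x i := by
  have hxi : 0 < x i := (hx i).lt_of_ne' <|
    Finset.prod_ne_zero_iff.1 (hm.trans_le hprod).ne' i (Finset.mem_univ i)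
  have hrest : ∏ j ∈ Finset.univ.erase i, x j ≤ K ^ (Fintype.card ι - 1) := by
    rw [← Finset.card_univ, ← Finset.card_erase_of_mem (Finset.mem_univ i)]
    exact (Finset.prod_le_prod (fun j _ => hx j) fun j _ => hxK j).trans_eq (Finset.prod_const K)
  rw [div_le_iff₀ (pow_pos (hxi.trans_le (hxK i)) _)]
  calc m ≤ ∏ j, x j := hprod
    _ = x i * ∏ j ∈ Finset.univ.erase i, x j :=
        (Finset.mul_prod_erase _ _ (Finset.mem_univ i)).symm
    _ ≤ x i * K ^ (Fintype.card ι - 1) := by gcongr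

lemma abs_rpow_sub_self_div_sub_mul_log_le {x n B : ℝ} (hx : 0 < x) (hB : |Real.log x| ≤ B)
    (hn : n ≠ 1) (hnB : |n - 1| * B ≤ 1) :
    |(x ^ n - x) / (n - 1) - x * Real.log x| ≤ x * B ^ 2 * |n - 1| := by
  have hn' : n - 1 ≠ 0 := sub_ne_zero.2 hn
  set u := (n - 1) * Real.log x
  have hu : |u| ≤ 1 := by
    rw [abs_mul]
    exact (mul_le_mul_of_nonneg_left hB (abs_nonneg _)).trans hnB
  have hxn : x ^ n = x * Real.exp u := by
    rw [Real.rpow_def_of_pos hx, show Real.log x * n = Real.log x + u by ring, Real.exp_add,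
      Real.exp_log hx]
  have key : (x ^ n - x) / (n - 1) - x * Real.log x = x * (Real.exp u - 1 - u) / (n - 1) := by
    rw [hxn]
    field_simp
    ring
  rw [key, abs_div, abs_mul, abs_of_pos hx, div_le_iff₀ (abs_pos.2 hn')]
  calc x * |Real.exp u - 1 - u| ≤ x * u ^ 2 :=
        mul_le_mul_of_nonneg_left (Real.abs_exp_sub_one_sub_id_le hu) hx.le
    _ = x * |Real.log x| ^ 2 * |n - 1| * |n - 1| := by
        rw [sq_abs, mul_assoc _ |n - 1|, abs_mul_abs_self]
        ring
    _ ≤ x * B ^ 2 * |n - 1| * |n - 1| := by gcongr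

lemma tendsto_rpow_sub_self_div_sub_mul_log {x : ℝ → ℝ} {m K : ℝ} (hm : 0 < m)
    (hx : ∀ᶠ n in 𝓝[≠] 1, x n ∈ Set.Icc m K) :
    Tendsto (fun n => (x n ^ n - x n) / (n - 1) - x n * Real.log (x n)) (𝓝[≠] 1) (𝓝 0) := by
  set B := max |Real.log m| |Real.log K|
  have hlim : Tendsto (fun n : ℝ => |n - 1|) (𝓝[≠] 1) (𝓝 0) :=
    ((continuous_sub_right 1).abs.tendsto' 1 0 (by simp)).mono_left nhdsWithin_le_nhds
  have hsmall : ∀ᶠ n in 𝓝[≠] 1, |n - 1| * B ≤ 1 :=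
    (hlim.mul_const B).eventually (ge_mem_nhds (by simp))
  refine squeeze_zero_norm' ?_ (by simpa using hlim.const_mul (K * B ^ 2))
  filter_upwards [hx, hsmall, self_mem_nhdsWithin] with n ⟨hmx, hxK⟩ hnB hn
  have hx0 : 0 < x n := hm.trans_le hmx
  have hB : |Real.log (x n)| ≤ B :=
    abs_le_max_abs_abs (Real.log_le_log hm hmx) (Real.log_le_log hx0 hxK)
  calc ‖(x n ^ n - x n) / (n - 1) - x n * Real.log (x n)‖ ≤ x n * B ^ 2 * |n - 1| :=
        abs_rpow_sub_self_div_sub_mul_log_le hx0 hB hn hnB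
    _ ≤ K * B ^ 2 * |n - 1| := by gcongr

lemma eventually_abs_one_sub_div_two_mul_le_half :
    ∀ᶠ n : ℝ in 𝓝[≠] 1, |(1 - n) / (2 * n)| ≤ 1 / 2 := by
  filter_upwards [nhdsWithin_le_nhds (Ici_mem_nhds (by norm_num : (1 / 2 : ℝ) < 1))] with n hn
  have hn : (1 / 2 : ℝ) ≤ n := hn
  rw [abs_div, abs_of_pos (by linarith : (0 : ℝ) < 2 * n), div_le_iff₀ (by linarith), abs_le]
  constructor <;> linarith

lemma tendsto_inv_mul_log_of_hasDerivAt {F : ℝ → ℝ} {D : ℝ} (hF : HasDerivAt F D 1)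
    (hF₁ : F 1 = 1) : Tendsto (fun n => (n - 1)⁻¹ * Real.log (F n)) (𝓝[≠] 1) (𝓝 D) := by
  have h := hasDerivAt_iff_tendsto_slope.1
    ((Real.hasDerivAt_log (by rw [hF₁]; exact one_ne_zero)).comp 1 hF)
  rw [hF₁, inv_one, one_mul] at h
  refine h.congr' (.of_forall fun n => ?_)
  rw [slope_def_field]
  simp [hF₁, div_eq_inv_mul]

lemma hasDerivAt_rpow_mul_rpow_one_sub_mul {p q t : ℝ} {T : ℝ → ℝ} (hp : 0 < p) (hq : 0 < q)
    (hT : HasDerivAt T t 1) (hT₁ : T 1 = 1) :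
    HasDerivAt (fun n => p ^ n * q ^ (1 - n) * T n) (p * Real.log (p / q) + p * t) 1 := by
  have hpn := (Real.hasStrictDerivAt_const_rpow hp 1).hasDerivAt
  have hqn := ((hasDerivAt_id' (1 : ℝ)).const_sub 1).const_rpow hq
  refine ((hpn.mul hqn).mul hT).congr_deriv ?_
  rw [hT₁, Real.log_div hp.ne' hq.ne']
  simp only [Real.rpow_one, sub_self, Real.rpow_zero, mul_one, mul_neg, Pi.mul_apply]
  ring

namespace Matrix

variable {d : Type*} [Fintype d] [DecidableEq d] {A : Matrix d d ℂ}

namespace IsHermitian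

lemma trace_cfc (hA : A.IsHermitian) (f : ℝ → ℝ) :
    (cfc f A).trace = ∑ i, (f (hA.eigenvalues i) : ℂ) := by
  rw [hA.cfc_eq, IsHermitian.cfc, Unitary.conjStarAlgAut_apply, trace_mul_cycle,
    Unitary.coe_star_mul_self, one_mul, trace_diagonal]
  rfl

lemma sum_eigenvalues_eq_re_trace_cfc (hA : A.IsHermitian) (g : ℝ → ℝ) :
    ∑ i, g (hA.eigenvalues i) = (cfc g A).trace.re := by
  simp [hA.trace_cfc]

lemma det_cfc (hA : A.IsHermitian) (f : ℝ → ℝ) :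
    (cfc f A).det = ∏ i, (f (hA.eigenvalues i) : ℂ) := by
  simp [hA.cfc_eq, IsHermitian.cfc, -Unitary.conjStarAlgAut_apply]

lemma re_trace_cfc_mul (hA : A.IsHermitian) (f : ℝ → ℝ) (B : Matrix d d ℂ) :
    (cfc f A * B).trace.re = ∑ i, f (hA.eigenvalues i) *
      (((star hA.eigenvectorUnitary : Matrix d d ℂ) * B * hA.eigenvectorUnitary) i i).re := by
  rw [hA.cfc_eq, IsHermitian.cfc, Unitary.conjStarAlgAut_apply, mul_assoc, trace_mul_cycle,
    trace_mul_cycle, ← mul_assoc]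
  simp [trace, diagonal_mul, Matrix.mul_assoc]

lemma re_trace_cfc_mul_le {B : Matrix d d ℂ} (hA : A.IsHermitian) (hB : B.PosSemidef)
    {f : ℝ → ℝ} {M : ℝ} (hf : ∀ i, f (hA.eigenvalues i) ≤ M) :
    (cfc f A * B).trace.re ≤ M * B.trace.re := by
  set U : Matrix d d ℂ := (hA.eigenvectorUnitary : Matrix d d ℂ)
  have hC : (star U * B * U).PosSemidef := by
    simpa [U, star_eq_conjTranspose] using hB.conjTranspose_mul_mul_same U
  have htrace : (star U * B * U).trace = B.trace := by
    rw [trace_mul_cycle, Unitary.mul_star_self_of_mem hA.eigenvectorUnitary.2, one_mul]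
  calc (cfc f A * B).trace.re = ∑ i, f (hA.eigenvalues i) * ((star U * B * U) i i).re :=
        hA.re_trace_cfc_mul f B
    _ ≤ ∑ i, M * ((star U * B * U) i i).re := by
        gcongr with i
        · exact (Complex.nonneg_iff.1 hC.diag_nonneg).1
        · exact hf i
    _ = M * B.trace.re := by
        rw [← Finset.mul_sum, ← htrace, trace, Complex.re_sum]
        rfl

end IsHermitian

lemma PosDef.pos_of_mem_spectrum (hA : A.PosDef) {x : ℝ} (hx : x ∈ spectrum ℝ A) : 0 < x := by
  rw [hA.isHermitian.spectrum_real_eq_range_eigenvalues] at hx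
  obtain ⟨i, rfl⟩ := hx
  exact hA.eigenvalues_pos i

-- The operator norm only supplies the isometric `cfc` instance; its topology is the entrywise one.
open scoped Matrix.Norms.L2Operator in
theorem tendsto_sum_eigenvalues {X : Type*} {l : Filter X} {A : X → Matrix d d ℂ}
    {A₀ : Matrix d d ℂ} (hA : ∀ x, (A x).IsHermitian) (hA₀ : A₀.IsHermitian)
    (hlim : Tendsto A l (𝓝 A₀)) {s : Set ℝ} (hs : IsCompact s)
    (hspec : ∀ᶠ x in l, ∀ i, (hA x).eigenvalues i ∈ s) (hspec₀ : ∀ i, hA₀.eigenvalues i ∈ s)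
    {g : ℝ → ℝ} (hg : ContinuousOn g s) :
    Tendsto (fun x => ∑ i, g ((hA x).eigenvalues i)) l (𝓝 (∑ i, g (hA₀.eigenvalues i))) := by
  have spectrum_subset {B : Matrix d d ℂ} (hB : B.IsHermitian) (h : ∀ i, hB.eigenvalues i ∈ s) :
      spectrum ℝ B ⊆ s := by
    rw [hB.spectrum_real_eq_range_eigenvalues]
    rintro _ ⟨i, rfl⟩
    exact h i
  simp only [fun x => (hA x).sum_eigenvalues_eq_re_trace_cfc g,
    hA₀.sum_eigenvalues_eq_re_trace_cfc]
  refine (Complex.continuous_re.comp continuous_id.matrix_trace).continuousAt.tendsto.comp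
    (hlim.cfc hs g ?_ (.of_forall fun x => (hA x).isSelfAdjoint) (spectrum_subset hA₀ hspec₀)
      hA₀.isSelfAdjoint hg)
  filter_upwards [hspec] with x hx using spectrum_subset (hA x) hx

end Matrix

section

variable {d : Type*} [Fintype d] [DecidableEq d]

section MatrixPower

variable {A : Matrix d d ℂ}

lemma mpow_eq_cfc (hA : A.IsHermitian) (r : ℝ) : mpow A r = cfc (fun x : ℝ => x ^ r) A := by
  rw [hA.cfc_eq]
  exact dif_pos hA

lemma mlog_eq_cfc (hA : A.IsHermitian) : mlog A = cfc Real.log A := by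
  rw [hA.cfc_eq]
  exact dif_pos hA

lemma mpow_isHermitian (hA : A.IsHermitian) (r : ℝ) : (mpow A r).IsHermitian := by
  rw [mpow_eq_cfc hA]
  exact cfc_predicate _ A

lemma mpow_zero (hA : A.IsHermitian) : mpow A 0 = 1 := by
  simp only [mpow_eq_cfc hA, Real.rpow_zero]
  exact cfc_const_one ℝ A

lemma mpow_one (hA : A.IsHermitian) : mpow A 1 = A := by
  simp only [mpow_eq_cfc hA, Real.rpow_one]
  exact cfc_id' ℝ A

lemma mpow_mul_mpow (hA : A.PosDef) (r s : ℝ) : mpow A r * mpow A s = mpow A (r + s) := by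
  simp only [mpow_eq_cfc hA.isHermitian]
  rw [← cfc_mul _ _ A (A.finite_real_spectrum.continuousOn _)
    (A.finite_real_spectrum.continuousOn _)]
  exact cfc_congr fun x hx => (Real.rpow_add (hA.pos_of_mem_spectrum hx) r s).symm

lemma det_mpow (hA : A.IsHermitian) (r : ℝ) :
    (mpow A r).det = ∏ i, ((hA.eigenvalues i ^ r : ℝ) : ℂ) := by
  rw [mpow_eq_cfc hA, hA.det_cfc]

lemma isUnit_mpow (hA : A.PosDef) (r : ℝ) : IsUnit (mpow A r) := by
  rw [isUnit_iff_isUnit_det, det_mpow hA.isHermitian, isUnit_iff_ne_zero]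
  exact Finset.prod_ne_zero_iff.2 fun i _ =>
    Complex.ofReal_ne_zero.2 (Real.rpow_pos_of_pos (hA.eigenvalues_pos i) r).ne'

lemma continuous_mpow (hA : A.PosDef) : Continuous (mpow A) := by
  have h : mpow A = fun r => (hA.isHermitian.eigenvectorUnitary : Matrix d d ℂ) *
      diagonal (fun i => ((hA.isHermitian.eigenvalues i ^ r : ℝ) : ℂ)) *
      (star hA.isHermitian.eigenvectorUnitary : Matrix d d ℂ) :=
    funext fun r => dif_pos hA.isHermitian
  rw [h]
  refine (continuous_const.matrix_mul (Continuous.matrix_diagonal ?_)).matrix_mul continuous_const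
  exact continuous_pi fun i => Complex.continuous_ofReal.comp
    (continuous_const.rpow continuous_id fun _ => Or.inl (hA.eigenvalues_pos i).ne')

lemma mul_mlog_self (hA : A.IsHermitian) : A * mlog A = cfc (fun x => x * Real.log x) A := by
  rw [mlog_eq_cfc hA]
  nth_rw 1 [← cfc_id' ℝ A hA.isSelfAdjoint]
  rw [← cfc_mul _ _ A (A.finite_real_spectrum.continuousOn _)
    (A.finite_real_spectrum.continuousOn _)]

lemma hasDerivAt_re_trace_mpow_mul (hA : A.PosDef) (B : Matrix d d ℂ) (s : ℝ) :
    HasDerivAt (fun t => (mpow A t * B).trace.re) ((mpow A s * mlog A * B).trace.re) s := by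
  have hA' := hA.isHermitian
  set c : d → ℝ := fun i =>
    (((star hA'.eigenvectorUnitary : Matrix d d ℂ) * B * hA'.eigenvectorUnitary) i i).re
  have hsum (t : ℝ) : (mpow A t * B).trace.re = ∑ i, hA'.eigenvalues i ^ t * c i := by
    rw [mpow_eq_cfc hA', hA'.re_trace_cfc_mul]
  rw [funext hsum, mpow_eq_cfc hA', mlog_eq_cfc hA', ← cfc_mul _ _ A
    (A.finite_real_spectrum.continuousOn _) (A.finite_real_spectrum.continuousOn _),
    hA'.re_trace_cfc_mul]
  exact HasDerivAt.fun_sum fun i _ =>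
    (Real.hasStrictDerivAt_const_rpow (hA.eigenvalues_pos i) s).hasDerivAt.mul_const (c i)

end MatrixPower

section Sandwich

variable {ρ σ : Matrix d d ℂ}

noncomputable def sandwich (σ ρ : Matrix d d ℂ) (r : ℝ) : Matrix d d ℂ :=
  mpow σ r * ρ * mpow σ r

lemma posDef_sandwich (hρ : ρ.PosDef) (hσ : σ.PosDef) (r : ℝ) : (sandwich σ ρ r).PosDef := by
  simpa [sandwich, (mpow_isHermitian hσ.isHermitian r).eq] using
    hρ.conjTranspose_mul_mul_same (mulVec_injective_of_isUnit (isUnit_mpow hσ r))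

lemma sandwich_zero (hσ : σ.IsHermitian) : sandwich σ ρ 0 = ρ := by
  rw [sandwich, mpow_zero hσ, one_mul, mul_one]

lemma trace_sandwich (hσ : σ.PosDef) (r : ℝ) :
    (sandwich σ ρ r).trace = (mpow σ (2 * r) * ρ).trace := by
  rw [sandwich, trace_mul_cycle, mpow_mul_mpow hσ, two_mul]

lemma det_sandwich (hσ : σ.PosDef) (r : ℝ) :
    (sandwich σ ρ r).det = (mpow σ (2 * r)).det * ρ.det := by
  rw [sandwich, det_mul, det_mul, mul_right_comm, ← det_mul, mpow_mul_mpow hσ, two_mul]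

lemma continuous_sandwich (hσ : σ.PosDef) : Continuous (sandwich σ ρ) :=
  ((continuous_mpow hσ).matrix_mul continuous_const).matrix_mul (continuous_mpow hσ)

lemma eigenvalues_sandwich_le (hρ : ρ.PosDef) (hσ : σ.PosDef) {r : ℝ} (hr : |r| ≤ 1 / 2)
    (i : d) : (posDef_sandwich hρ hσ r).isHermitian.eigenvalues i ≤
      (∑ j, max (hσ.isHermitian.eigenvalues j) (hσ.isHermitian.eigenvalues j)⁻¹) * ρ.trace.re := by
  set ν := hσ.isHermitian.eigenvalues
  have hN := posDef_sandwich hρ hσ r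
  have h2r : |2 * r| ≤ 1 := by rw [abs_mul, abs_two]; linarith
  calc hN.isHermitian.eigenvalues i ≤ ∑ j, hN.isHermitian.eigenvalues j :=
        Finset.single_le_sum (fun j _ => (hN.eigenvalues_pos j).le) (Finset.mem_univ i)
    _ = (mpow σ (2 * r) * ρ).trace.re := by
        rw [← trace_sandwich hσ, hN.isHermitian.trace_eq_sum_eigenvalues]
        simp
    _ ≤ _ := by
        rw [mpow_eq_cfc hσ.isHermitian]
        refine hσ.isHermitian.re_trace_cfc_mul_le hρ.posSemidef fun j => ?_
        refine (rpow_le_max_self_inv (hσ.eigenvalues_pos j) h2r).trans ?_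
        exact Finset.single_le_sum (f := fun j => max (ν j) (ν j)⁻¹)
          (fun j _ => (hσ.eigenvalues_pos j).le.trans (le_max_left _ _)) (Finset.mem_univ j)

lemma prod_le_prod_eigenvalues_sandwich (hρ : ρ.PosDef) (hσ : σ.PosDef) {r : ℝ}
    (hr : |r| ≤ 1 / 2) :
    (∏ j, (max (hσ.isHermitian.eigenvalues j) (hσ.isHermitian.eigenvalues j)⁻¹)⁻¹) *
        ∏ i, hρ.isHermitian.eigenvalues i ≤
      ∏ i, (posDef_sandwich hρ hσ r).isHermitian.eigenvalues i := by
  have h2r : |2 * r| ≤ 1 := by rw [abs_mul, abs_two]; linarith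
  have hprod : ∏ i, (posDef_sandwich hρ hσ r).isHermitian.eigenvalues i =
      (∏ j, hσ.isHermitian.eigenvalues j ^ (2 * r)) * ∏ i, hρ.isHermitian.eigenvalues i := by
    have h := (posDef_sandwich hρ hσ r).isHermitian.det_eq_prod_eigenvalues
    rw [det_sandwich hσ, det_mpow hσ.isHermitian, hρ.isHermitian.det_eq_prod_eigenvalues] at h
    apply Complex.ofReal_injective
    simpa using h.symm
  rw [hprod]
  gcongr with j
  · exact Finset.prod_nonneg fun i _ => (hρ.eigenvalues_pos i).le
  · exact fun j _ => inv_nonneg.2 ((hσ.eigenvalues_pos j).le.trans (le_max_left _ _))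
  · exact inv_max_self_inv_le_rpow (hσ.eigenvalues_pos j) h2r

lemma exists_eigenvalues_sandwich_mem_Icc (hρ : ρ.PosDef) (hσ : σ.PosDef) :
    ∃ m K : ℝ, 0 < m ∧ ∀ r, |r| ≤ 1 / 2 → ∀ i,
      (posDef_sandwich hρ hσ r).isHermitian.eigenvalues i ∈ Set.Icc m K := by
  set ν := hσ.isHermitian.eigenvalues
  set K := max ((∑ j, max (ν j) (ν j)⁻¹) * ρ.trace.re) 1
  set m := (∏ j, (max (ν j) (ν j)⁻¹)⁻¹) * ∏ i, hρ.isHermitian.eigenvalues i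
  have hm : 0 < m := mul_pos
    (Finset.prod_pos fun j _ => inv_pos.2 ((hσ.eigenvalues_pos j).trans_le (le_max_left _ _)))
    (Finset.prod_pos fun i _ => hρ.eigenvalues_pos i)
  have hle (r : ℝ) (hr : |r| ≤ 1 / 2) (i : d) :
      (posDef_sandwich hρ hσ r).isHermitian.eigenvalues i ≤ K :=
    (eigenvalues_sandwich_le hρ hσ hr i).trans (le_max_left _ _)
  refine ⟨m / K ^ (Fintype.card d - 1), K, by positivity, fun r hr i => ⟨?_, hle r hr i⟩⟩
  exact div_pow_card_sub_one_le_of_le_prod hm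
    (fun j => ((posDef_sandwich hρ hσ r).eigenvalues_pos j).le) (hle r hr)
    (prod_le_prod_eigenvalues_sandwich hρ hσ hr) i

end Sandwich

section RenyiTrace

variable {ρ σ : Matrix d d ℂ}

noncomputable def renyiTrace (ρ σ : Matrix d d ℂ) (n : ℝ) : ℝ :=
  (mpow (sandwich σ ρ ((1 - n) / (2 * n))) n).trace.re

lemma renyiTrace_eq_sum (hρ : ρ.PosDef) (hσ : σ.PosDef) (n : ℝ) :
    renyiTrace ρ σ n =
      ∑ i, (posDef_sandwich hρ hσ ((1 - n) / (2 * n))).isHermitian.eigenvalues i ^ n := by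
  rw [renyiTrace, mpow_eq_cfc (posDef_sandwich hρ hσ _).isHermitian,
    (posDef_sandwich hρ hσ _).isHermitian.trace_cfc]
  simp

lemma renyiTrace_pos [Nonempty d] (hρ : ρ.PosDef) (hσ : σ.PosDef) (n : ℝ) :
    0 < renyiTrace ρ σ n := by
  rw [renyiTrace_eq_sum hρ hσ]
  exact Finset.sum_pos
    (fun i _ => Real.rpow_pos_of_pos ((posDef_sandwich hρ hσ _).eigenvalues_pos i) n)
    Finset.univ_nonempty

lemma renyiTrace_one (hρ : ρ.IsHermitian) (hσ : σ.IsHermitian) (hρ₁ : ρ.trace = 1) :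
    renyiTrace ρ σ 1 = 1 := by
  norm_num [renyiTrace, sandwich_zero hσ, mpow_one hρ, hρ₁]

lemma hasDerivAt_re_trace_sandwich (hσ : σ.PosDef) :
    HasDerivAt (fun n => (sandwich σ ρ ((1 - n) / (2 * n))).trace.re)
      (-(ρ * mlog σ).trace.re) 1 := by
  have hexp : HasDerivAt (fun n : ℝ => 2 * ((1 - n) / (2 * n))) (-1) 1 := by
    have hnum : HasDerivAt (fun n : ℝ => 1 - n) (-1) 1 := by
      simpa using (hasDerivAt_id' (1 : ℝ)).const_sub 1
    have hden : HasDerivAt (fun n : ℝ => 2 * n) 2 1 := by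
      simpa using (hasDerivAt_id' (1 : ℝ)).const_mul 2
    refine ((hnum.div hden (by norm_num)).const_mul 2).congr_deriv ?_
    norm_num
  simp only [trace_sandwich hσ]
  refine ((hasDerivAt_re_trace_mpow_mul hσ ρ _).comp 1 hexp).congr_deriv ?_
  norm_num [mpow_zero hσ.isHermitian, trace_mul_comm ρ]

lemma tendsto_sum_slope_rpow_eigenvalues_sandwich (hρ : ρ.PosDef) (hσ : σ.PosDef) :
    Tendsto (fun n => ∑ i,
        ((posDef_sandwich hρ hσ ((1 - n) / (2 * n))).isHermitian.eigenvalues i ^ n -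
          (posDef_sandwich hρ hσ ((1 - n) / (2 * n))).isHermitian.eigenvalues i) / (n - 1))
      (𝓝[≠] 1) (𝓝 (ρ * mlog ρ).trace.re) := by
  set μ : ℝ → d → ℝ := fun n =>
    (posDef_sandwich hρ hσ ((1 - n) / (2 * n))).isHermitian.eigenvalues
  obtain ⟨m, K, hm, hbound⟩ := exists_eigenvalues_sandwich_mem_Icc hρ hσ
  have hμ : ∀ᶠ n in 𝓝[≠] 1, ∀ i, μ n i ∈ Set.Icc m K := by
    filter_upwards [eventually_abs_one_sub_div_two_mul_le_half] with n hn using hbound _ hn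
  have hlim :
      Tendsto (fun n => sandwich σ ρ ((1 - n) / (2 * n))) (𝓝[≠] 1) (𝓝 (sandwich σ ρ 0)) := by
    have hc : Tendsto (fun n : ℝ => (1 - n) / (2 * n)) (𝓝[≠] 1) (𝓝 0) := by
      have : ContinuousAt (fun n : ℝ => (1 - n) / (2 * n)) 1 := by fun_prop (disch := norm_num)
      simpa using this.tendsto.mono_left nhdsWithin_le_nhds
    exact ((continuous_sandwich hσ).tendsto 0).comp hc
  have hent : Tendsto (fun n => ∑ i, μ n i * Real.log (μ n i)) (𝓝[≠] 1)
      (𝓝 (ρ * mlog ρ).trace.re) := by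
    have := tendsto_sum_eigenvalues
      (fun n => (posDef_sandwich hρ hσ ((1 - n) / (2 * n))).isHermitian)
      (posDef_sandwich hρ hσ 0).isHermitian hlim isCompact_Icc hμ (hbound 0 (by norm_num))
      (g := fun x => x * Real.log x) Real.continuous_mul_log.continuousOn
    have hρlog : ∑ i, (posDef_sandwich hρ hσ 0).isHermitian.eigenvalues i *
        Real.log ((posDef_sandwich hρ hσ 0).isHermitian.eigenvalues i) =
          (ρ * mlog ρ).trace.re := by
      refine ((posDef_sandwich hρ hσ 0).isHermitian.sum_eigenvalues_eq_re_trace_cfc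
        (fun x => x * Real.log x)).trans ?_
      rw [sandwich_zero hσ.isHermitian, mul_mlog_self hρ.isHermitian]
    rwa [hρlog] at this
  have hdiff := tendsto_finsetSum Finset.univ fun i _ =>
    tendsto_rpow_sub_self_div_sub_mul_log (x := fun n => μ n i) hm
      (by filter_upwards [hμ] with n hn using hn i)
  simpa using hdiff.add hent

theorem hasDerivAt_renyiTrace (hρ : ρ.PosDef) (hσ : σ.PosDef) (hρ₁ : ρ.trace = 1) :
    HasDerivAt (renyiTrace ρ σ) (relEnt ρ σ) 1 := by
  have htr := hasDerivAt_iff_tendsto_slope.1 (hasDerivAt_re_trace_sandwich (ρ := ρ) hσ)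
  rw [hasDerivAt_iff_tendsto_slope, relEnt, Complex.sub_re, sub_eq_add_neg]
  refine ((tendsto_sum_slope_rpow_eigenvalues_sandwich hρ hσ).add htr).congr' ?_
  filter_upwards with n
  have hN := (posDef_sandwich hρ hσ ((1 - n) / (2 * n))).isHermitian
  have htr₁ : (sandwich σ ρ ((1 - 1) / (2 * 1))).trace.re = 1 := by
    norm_num [sandwich_zero hσ.isHermitian, hρ₁]
  rw [slope_def_field, slope_def_field]
  simp only [renyiTrace_eq_sum hρ hσ n,
    renyiTrace_one hρ.isHermitian hσ.isHermitian hρ₁, htr₁, hN.trace_eq_sum_eigenvalues]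
  rw [← Finset.sum_div, Finset.sum_sub_distrib, Complex.re_sum]
  simp only [Complex.coe_algebraMap, Complex.ofReal_re]
  ring

lemma exp_mul_SRenyi [Nonempty d] (hρ : ρ.PosDef) (hσ : σ.PosDef) {n : ℝ} (hn : n ≠ 1) :
    Real.exp ((n - 1) * SRenyi n ρ σ) = renyiTrace ρ σ n := by
  rw [SRenyi, ← mul_assoc, mul_inv_cancel₀ (sub_ne_zero.2 hn), one_mul]
  exact Real.exp_log (renyiTrace_pos hρ hσ n)

end RenyiTrace

end

open Filter in
theorem srenyi_alg_tendsto_relEnt_general {ι : Type*} [Fintype ι] (da : ι → ℕ)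
    (p q : ι → ℝ) (hp : ∀ α, 0 < p α) (hp1 : ∑ α, p α = 1)
    (hq : ∀ α, 0 < q α)
    (ρ σ : ∀ α, Matrix (Fin (da α)) (Fin (da α)) ℂ)
    (hρ : ∀ α, IsDensity (ρ α))
    (hρpd : ∀ α, (ρ α).PosDef) (hσpd : ∀ α, (σ α).PosDef) :
    Tendsto
      (fun n : ℝ => (n - 1)⁻¹ *
        Real.log (∑ α, p α ^ n * q α ^ (1 - n) * Real.exp ((n - 1) * SRenyi n (ρ α) (σ α))))
      (nhdsWithin 1 {(1 : ℝ)}ᶜ)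
      (nhds (∑ α, p α * Real.log (p α / q α) + ∑ α, p α * relEnt (ρ α) (σ α))) := by
  have hnonempty (α : ι) : Nonempty (Fin (da α)) := by
    by_contra h
    rw [not_nonempty_iff] at h
    simpa [Matrix.trace] using (hρ α).2
  have hF := HasDerivAt.fun_sum (u := Finset.univ) fun α _ =>
    hasDerivAt_rpow_mul_rpow_one_sub_mul (hp α) (hq α)
      (hasDerivAt_renyiTrace (hρpd α) (hσpd α) (hρ α).2)
      (renyiTrace_one (hρpd α).isHermitian (hσpd α).isHermitian (hρ α).2)
  rw [← Finset.sum_add_distrib]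
  refine (tendsto_inv_mul_log_of_hasDerivAt hF ?_).congr' ?_
  · simp [renyiTrace_one (hρpd _).isHermitian (hσpd _).isHermitian (hρ _).2, hp1]
  · filter_upwards [self_mem_nhdsWithin] with n hn
    simp only [exp_mul_SRenyi (hρpd _) (hσpd _) hn]

open Filter in
/-- the algebraic sandwiched Rényi relative entropy converges to the
algebraic relative entropy as the Rényi index tends to 1. -/
theorem srenyi_alg_tendsto_relEnt {ι : Type*} [Fintype ι] (da : ι → ℕ)
    (p q : ι → ℝ) (hp : ∀ α, 0 < p α) (hp1 : ∑ α, p α = 1)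
    (hq : ∀ α, 0 < q α) (hq1 : ∑ α, q α = 1)
    (ρ σ : ∀ α, Matrix (Fin (da α)) (Fin (da α)) ℂ)
    (hρ : ∀ α, IsDensity (ρ α)) (hσ : ∀ α, IsDensity (σ α))
    (hρpd : ∀ α, (ρ α).PosDef) (hσpd : ∀ α, (σ α).PosDef) :
    Tendsto
      (fun n : ℝ => (n - 1)⁻¹ *
        Real.log (∑ α, p α ^ n * q α ^ (1 - n) * Real.exp ((n - 1) * SRenyi n (ρ α) (σ α))))
      (nhdsWithin 1 {(1 : ℝ)}ᶜ)
      (nhds (∑ α, p α * Real.log (p α / q α) + ∑ α, p α * relEnt (ρ α) (σ α))) :=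
  srenyi_alg_tendsto_relEnt_general da p q hp hp1 hq ρ σ hρ hρpd hσpd
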